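/- Let T be an x-monotone terrain, h a height above T, and f(h) the leftmost point among the rightmost placements F(e,h) over all edges e of T (where F(e,h) is the rightmost point on L(h) fully seeing e). Then every point p of T with x(v₁) ≤ x(p) ≤ x(f(h)) is visible from f(h). -/

import Mathlib

open Set

/-! The point `p = (t, f t)` lies on some edge `e`, which is fully visible from `(F e, h)`.
Since `t ≤ f(h) ≤ F e`, moving the guard along `L(h)` from `F e` to `f(h)` only raises the
sight line from `p` at every abscissa, as both sight lines end at the height `h ≥ f t`. -/

/-- An x-monotone polygonal terrain: vertices `x 0 < x 1 < ⋯ < x N` on the x-axis,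
heights given by `f`, which is affine with slope `m i` and intercept `c i` on the
`i`-th edge. -/
structure Terrain where
  N : ℕ
  hN : 1 ≤ N
  x : Fin (N + 1) → ℝ
  hx : StrictMono x
  f : ℝ → ℝ
  m : Fin N → ℝ
  c : Fin N → ℝ
  haff : ∀ i : Fin N, ∀ t ∈ Set.Icc (x i.castSucc) (x i.succ), f t = m i * t + c i

/-- Left endpoint of the domain of the terrain. -/
def Terrain.a (T : Terrain) : ℝ := T.x 0

/-- Right endpoint of the domain of the terrain. -/
def Terrain.b (T : Terrain) : ℝ := T.x (Fin.last T.N)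

/-- Visibility: the segment from terrain point `p` to guard `u` stays on or above
the terrain. -/
def Terrain.Vis (T : Terrain) (p u : ℝ × ℝ) : Prop :=
  ∀ q ∈ segment ℝ p u, q.1 ∈ Set.Icc T.a T.b → T.f q.1 ≤ q.2

/-- Full visibility of the `i`-th edge from the point `u`. -/
def Terrain.EdgeVis (T : Terrain) (i : Fin T.N) (u : ℝ × ℝ) : Prop :=
  ∀ t ∈ Set.Icc (T.x i.castSucc) (T.x i.succ), T.Vis (t, T.f t) u

open Fin.NatCast in
theorem Monotone.exists_mem_Icc_castSucc_succ {α : Type*} [LinearOrder α] {n : ℕ} [NeZero n]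
    {x : Fin (n + 1) → α} (hx : Monotone x) {t : α} (ht : t ∈ Icc (x 0) (x (Fin.last n))) :
    ∃ i : Fin n, t ∈ Icc (x i.castSucc) (x i.succ) := by
  rcases ht.1.eq_or_lt with rfl | h0
  · exact ⟨0, le_rfl, hx (Fin.zero_le _)⟩
  obtain ⟨k, hk, hmem⟩ := mem_iUnion₂.1 <| Ioc_subset_biUnion_Ioc n (fun k : ℕ => x k)
    ⟨by simpa using h0, by simpa using ht.2⟩
  have hk : k < n := Finset.mem_range.1 hk
  refine ⟨⟨k, hk⟩, ?_, ?_⟩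
  · simpa [Fin.natCast_eq_mk (Nat.lt_succ_of_lt hk)] using hmem.1.le
  · simpa [Fin.natCast_eq_mk (Nat.succ_lt_succ hk)] using hmem.2

theorem exists_mem_segment_fst_eq_snd_le {p : ℝ × ℝ} {h u v : ℝ} (hp : p.2 ≤ h)
    (hu : u ∈ segment ℝ p.1 v) {q : ℝ × ℝ} (hq : q ∈ segment ℝ p (u, h)) :
    ∃ q' ∈ segment ℝ p (v, h), q'.1 = q.1 ∧ q'.2 ≤ q.2 := by
  rw [segment_eq_image'] at hu hq ⊢
  obtain ⟨s, ⟨hs0, hs1⟩, rfl⟩ := hu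
  obtain ⟨θ, ⟨hθ0, hθ1⟩, rfl⟩ := hq
  -- the new sight line reaches abscissa `q.1` at parameter `θ * s`
  refine ⟨_, ⟨θ * s, ⟨by positivity, mul_le_one₀ hθ1 hs0 hs1⟩, rfl⟩, ?_, ?_⟩
  · simp only [Prod.fst_add, Prod.smul_fst, Prod.fst_sub, smul_eq_mul]
    ring
  · simp only [Prod.snd_add, Prod.smul_snd, Prod.snd_sub, smul_eq_mul]
    nlinarith [mul_nonneg hθ0 (sub_nonneg.2 hp)]

theorem Terrain.Vis.of_mem_segment {T : Terrain} {p : ℝ × ℝ} {h u v : ℝ}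
    (hv : T.Vis p (v, h)) (hp : p.2 ≤ h) (hu : u ∈ segment ℝ p.1 v) : T.Vis p (u, h) := by
  intro q hq hqx
  obtain ⟨q', hq', hx, hy⟩ := exists_mem_segment_fst_eq_snd_le hp hu hq
  rw [← hx] at hqx ⊢
  exact (hv q' hq' hqx).trans hy

theorem stmt7_general (T : Terrain) (h : ℝ)
    (hh : ∀ t ∈ Set.Icc T.a T.b, T.f t ≤ h)
    (F : Fin T.N → ℝ)
    (hFvis : ∀ i, T.EdgeVis i (F i, h))
    (fh : ℝ) (hfh₁ : ∀ i, fh ≤ F i)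
    (t : ℝ) (ht : t ∈ Set.Icc T.a T.b) (htf : t ≤ fh) :
    T.Vis (t, T.f t) (fh, h) := by
  have : NeZero T.N := ⟨Nat.one_le_iff_ne_zero.1 T.hN⟩
  obtain ⟨i, hi⟩ := T.hx.monotone.exists_mem_Icc_castSucc_succ ht
  exact (hFvis i t hi).of_mem_segment (hh t ht) (Icc_subset_segment ⟨htf, hfh₁ i⟩)

/-- Every point `p` of `T` with `x(v₁) ≤ x(p) ≤ x(f(h))` is visible from `f(h)`,
where `f(h)` is the leftmost among the rightmost full-visibility placements
`F(e,h)` over all edges `e` of `T`. -/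
theorem stmt7 (T : Terrain) (h : ℝ)
    (hh : ∀ t ∈ Set.Icc T.a T.b, T.f t ≤ h)
    (F : Fin T.N → ℝ)
    (hFvis : ∀ i, T.EdgeVis i (F i, h))
    (hFmax : ∀ i, ∀ p : ℝ, T.EdgeVis i (p, h) → p ≤ F i)
    (fh : ℝ) (hfh₁ : ∀ i, fh ≤ F i) (hfh₂ : ∃ i, fh = F i)
    (t : ℝ) (ht : t ∈ Set.Icc T.a T.b) (htf : t ≤ fh) :
    T.Vis (t, T.f t) (fh, h) :=
  stmt7_general T h hh F hFvis fh hfh₁ t ht htf
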